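/- Let p be a prime with p ≠ 2 and p ≠ 3. Then the equation w² = 3p + 6pz⁴ has solutions z, w in each of the fields ℚ₂, ℚ₃ and ℚ_p if and only if one of the following holds: p ≡ 11 or 19 (mod 24); or p ≡ 1 or 17 (mod 24) and 2 is a fourth power modulo p. -/

import Mathlib

/-!
Write the equation as `w² = 3p(1 + 2z⁴)` and compare valuations: if `‖z‖ > 1` the
right-hand side has odd valuation, so only integral `z` can occur. Over `ℚ_p` a point then
forces `1 + 2z⁴ ≡ 0 (mod p)`, and conversely Hensel lifts such a root to `2z⁴ = 3p - 1`,
where `w = 3p`. Over `ℚ_2` reduction mod 8 forces `p ≡ 1, 3 (mod 8)`, and then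
`(z, w) = (1, 3√p)` or `(0, √(3p))` is a point; over `ℚ_3` one of `(1, 3√p)`, `(2, 3√(11p))`
always is. Finally, `1 + 2x⁴ = 0` is solvable mod `p` for `p ≡ 3 (mod 8)` because then squares
are fourth powers and `-1/2` is a square, while for `p ≡ 1 (mod 8)` a primitive eighth root of
unity `j` turns `x⁴ = -1/2` into `(jx)⁻⁴ = 2`.
-/

theorem exists_one_add_two_mul_pow_four_eq_zero_iff_of_pow_four_eq_neg_one {K : Type*}
    [Field K] (h2 : (2 : K) ≠ 0) {j : K} (hj : j ^ 4 = -1) :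
    (∃ x : K, 1 + 2 * x ^ 4 = 0) ↔ ∃ y : K, y ^ 4 = 2 := by
  constructor
  · rintro ⟨x, hx⟩
    refine ⟨(j * x)⁻¹, ?_⟩
    rw [inv_pow]
    apply inv_eq_of_mul_eq_one_right
    linear_combination 2 * x ^ 4 * hj - hx
  · rintro ⟨y, hy⟩
    have hy0 : y ≠ 0 := by rintro rfl; exact h2 (by simpa using hy.symm)
    refine ⟨j * y⁻¹, ?_⟩
    field_simp
    linear_combination hy + 2 * hj

theorem Int.exists_pow_modEq_iff {n k : ℕ} {a : ℤ} :
    (∃ x : ℤ, x ^ k ≡ a [ZMOD n]) ↔ ∃ y : ZMod n, y ^ k = a := by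
  simp only [ZMod.intCast_surjective.exists, ← ZMod.intCast_eq_intCast_iff, Int.cast_pow]

namespace ZMod

variable {p : ℕ} [Fact p.Prime]

theorem exists_pow_four_eq_of_isSquare (hp : p % 4 = 3) {a : ZMod p} (ha : IsSquare a) :
    ∃ x : ZMod p, x ^ 4 = a := by
  obtain ⟨s, rfl⟩ := ha
  rcases eq_or_ne s 0 with rfl | hs
  · exact ⟨0, by simp⟩
  refine ⟨s ^ ((p + 1) / 4), ?_⟩
  rw [← pow_mul, show (p + 1) / 4 * 4 = 2 + (p - 1) by omega, pow_add,
    pow_card_sub_one_eq_one hs, mul_one, sq]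

theorem exists_one_add_two_mul_pow_four_eq_zero (hp : p % 8 = 3) :
    ∃ x : ZMod p, 1 + 2 * x ^ 4 = 0 := by
  have h2 : (2 : ZMod p) ≠ 0 := Ring.two_ne_zero (by rw [ringChar_zmod_n]; omega)
  obtain ⟨s, hs⟩ := (exists_sq_eq_neg_two_iff (by omega)).mpr (Or.inr hp)
  obtain ⟨x, hx⟩ := exists_pow_four_eq_of_isSquare (by omega) ⟨s / 2, rfl⟩
  refine ⟨x, ?_⟩
  rw [hx]
  field_simp
  linear_combination -hs

theorem exists_one_add_two_mul_pow_four_eq_zero_iff (hp : p % 8 = 1) :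
    (∃ x : ZMod p, 1 + 2 * x ^ 4 = 0) ↔ ∃ y : ZMod p, y ^ 4 = 2 := by
  have h2 : (2 : ZMod p) ≠ 0 := Ring.two_ne_zero (by rw [ringChar_zmod_n]; omega)
  obtain ⟨i, hi⟩ := exists_sq_eq_neg_one_iff.mpr (by omega : p % 4 ≠ 3)
  obtain ⟨s, hs⟩ := (exists_sq_eq_two_iff (by omega)).mpr (Or.inl hp)
  have hs0 : s ≠ 0 := by rintro rfl; exact h2 (by simpa using hs)
  refine exists_one_add_two_mul_pow_four_eq_zero_iff_of_pow_four_eq_neg_one h2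
    (j := (1 + i) / s) ?_
  -- `((1 + i) / s) ^ 2 = 2 * i / 2 = i`
  field_simp
  linear_combination (-(i ^ 2 + 4 * i + 5)) * hi - (s ^ 2 + 2) * hs

end ZMod

namespace PadicInt

variable {q : ℕ} [Fact q.Prime]

open Polynomial in
theorem exists_mul_pow_eq_of_norm_lt {n : ℕ} {a b c : ℤ_[q]}
    (h : ‖b * a ^ n - c‖ < ‖n * b * a ^ (n - 1)‖ ^ 2) : ∃ z : ℤ_[q], b * z ^ n = c := by
  obtain ⟨z, hz, -⟩ := hensels_lemma (F := C b * X ^ n - C c) (a := a) <| by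
    convert h using 3
    · simp
    · simp [derivative_X_pow]; ring
  exact ⟨z, sub_eq_zero.mp (by simpa using hz)⟩

theorem exists_sq_eq_of_norm_one_sub_lt {c : ℤ_[q]} (hc : ‖1 - c‖ < ‖(2 : ℤ_[q])‖ ^ 2) :
    ∃ s : ℤ_[q], s ^ 2 = c := by
  simpa using exists_mul_pow_eq_of_norm_lt (n := 2) (a := 1) (b := 1) (by simpa using hc)

theorem exists_sq_eq_of_dvd_sub_one (hq : q ≠ 2) {c : ℤ} (hc : (q : ℤ) ∣ c - 1) :
    ∃ s : ℤ_[q], s ^ 2 = c := by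
  apply exists_sq_eq_of_norm_one_sub_lt
  have h2 : ‖(2 : ℤ_[q])‖ = 1 := by
    exact_mod_cast norm_natCast_eq_one_iff.mpr ((Nat.coprime_primes Fact.out Nat.prime_two).mpr hq)
  rw [h2, one_pow]
  exact_mod_cast (norm_intCast_lt_one_iff (p := q) (z := 1 - c)).mpr (dvd_sub_comm.mp hc)

theorem exists_sq_eq_of_eight_dvd_sub_one {c : ℤ} (hc : 8 ∣ c - 1) :
    ∃ s : ℤ_[2], s ^ 2 = c := by
  apply exists_sq_eq_of_norm_one_sub_lt
  have h8 : ‖((1 - c : ℤ) : ℤ_[2])‖ ≤ (2 : ℝ) ^ (-3 : ℤ) :=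
    norm_int_le_pow_iff_dvd (n := 3) |>.mpr (dvd_sub_comm.mp hc)
  have h2 : ‖(2 : ℤ_[2])‖ = 2⁻¹ := by exact_mod_cast norm_p (p := 2)
  push_cast at h8
  rw [h2]
  norm_num at h8 ⊢
  linarith

theorem toZMod_eq_zero_iff_norm_lt_one {x : ℤ_[q]} : toZMod x = 0 ↔ ‖x‖ < 1 := by
  rw [← RingHom.mem_ker, ker_toZMod, IsLocalRing.mem_maximalIdeal, mem_nonunits]

theorem mod_eight_eq_one_or_three_of_sq_eq {p : ℕ} (hp : p % 2 = 1) {z w : ℤ_[2]}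
    (h : w ^ 2 = 3 * p + 6 * p * z ^ 4) : p % 8 = 1 ∨ p % 8 = 3 := by
  have h8 := congrArg (toZModPow 3) h
  simp only [map_add, map_mul, map_pow, map_natCast, map_ofNat] at h8
  have key : ∀ c W Z : ZMod 8, W ^ 2 = 3 * c + 6 * c * Z ^ 4 → c.val % 2 = 1 →
      c.val = 1 ∨ c.val = 3 := by decide
  rw [← ZMod.val_natCast 8 p]
  exact key _ _ _ h8 (by rw [ZMod.val_natCast]; omega)

end PadicInt

namespace Padic

variable {q : ℕ} [Fact q.Prime]

theorem sq_ne_of_norm_eq_zpow_of_odd {w x : ℚ_[q]} {e : ℤ} (he : Odd e)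
    (hx : ‖x‖ = (q : ℝ) ^ e) : w ^ 2 ≠ x := by
  have hq : (1 : ℝ) < q := mod_cast (Fact.out : q.Prime).one_lt
  rintro rfl
  have hw : w ≠ 0 := by
    rintro rfl
    simp only [ne_eq, OfNat.ofNat_ne_zero, not_false_eq_true, zero_pow, norm_zero] at hx
    exact (zpow_pos (by linarith) e).ne hx
  rw [norm_pow, norm_eq_zpow_neg_valuation hw, ← zpow_natCast, ← zpow_mul,
    zpow_right_inj₀ (by linarith) hq.ne'] at hx
  obtain ⟨k, rfl⟩ := he
  omega

theorem sq_ne_mul_one_add_mul_pow_four {a b z w : ℚ_[q]} (hab : ‖a * b‖ = (q : ℝ)⁻¹)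
    (hbz : 1 < ‖b * z ^ 4‖) : w ^ 2 ≠ a * (1 + b * z ^ 4) := by
  have hz : z ≠ 0 := by rintro rfl; norm_num at hbz
  apply sq_ne_of_norm_eq_zpow_of_odd (e := -1 - 4 * z.valuation) ⟨-1 - 2 * z.valuation, by ring⟩
  have hsum : ‖1 + b * z ^ 4‖ = ‖b * z ^ 4‖ := by
    rw [add_eq_max_of_ne (by rw [norm_one]; exact hbz.ne), norm_one, max_eq_right hbz.le]
  have hq : (q : ℝ) ≠ 0 := by exact_mod_cast (Fact.out : q.Prime).ne_zero
  calc ‖a * (1 + b * z ^ 4)‖ = ‖a * b‖ * ‖z‖ ^ 4 := by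
        rw [norm_mul, hsum, norm_mul, norm_mul, norm_pow]; ring
    _ = (q : ℝ) ^ (-1 - 4 * z.valuation) := by
        rw [hab, norm_eq_zpow_neg_valuation hz, ← zpow_natCast, ← zpow_mul, ← zpow_neg_one,
          ← zpow_add₀ hq]
        ring_nf

end Padic

def HasC3pPoint (K : Type*) [CommRing K] (p : ℕ) : Prop :=
  ∃ z w : K, w ^ 2 = 3 * (p : K) + 6 * (p : K) * z ^ 4

namespace HasC3pPoint

variable {R S : Type*} [CommRing R] [CommRing S] {p : ℕ}

theorem map (f : R →+* S) (h : HasC3pPoint R p) : HasC3pPoint S p := by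
  obtain ⟨z, w, h⟩ := h
  exact ⟨f z, f w, by simpa [map_ofNat] using congrArg f h⟩

theorem of_sq_eq {c z k : ℤ} (hc : k ^ 2 * c = 3 * p + 6 * p * z ^ 4) {s : R}
    (hs : s ^ 2 = c) : HasC3pPoint R p :=
  ⟨z, k * s, by rw [mul_pow, hs, ← Int.cast_pow, ← Int.cast_mul, hc]; push_cast; ring⟩

end HasC3pPoint

open PadicInt

theorem hasC3pPoint_padic_two_iff {p : ℕ} (hp : p % 2 = 1) :
    HasC3pPoint ℚ_[2] p ↔ p % 8 = 1 ∨ p % 8 = 3 := by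
  constructor
  · rintro ⟨z, w, h⟩
    rcases le_or_gt ‖z‖ 1 with hz | hz
    · obtain ⟨z, rfl⟩ : ∃ z' : ℤ_[2], (z' : ℚ_[2]) = z := ⟨⟨z, hz⟩, rfl⟩
      have hw : ‖w‖ ≤ 1 := by
        have : ‖w‖ ^ 2 ≤ 1 := by
          rw [← norm_pow, h]
          exact norm_le_one (3 * p + 6 * p * z ^ 4 : ℤ_[2])
        exact (pow_le_one_iff_of_nonneg (norm_nonneg w) two_ne_zero).mp this
      exact mod_eight_eq_one_or_three_of_sq_eq (w := ⟨w, hw⟩) hp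
        (PadicInt.ext (by push_cast; exact h))
    · have h2 : ‖(2 : ℚ_[2])‖ = 2⁻¹ := by exact_mod_cast Padic.norm_p (p := 2)
      have h3p : ‖(3 * p : ℚ_[2])‖ = 1 := by
        exact_mod_cast Padic.norm_natCast_eq_one_iff.mpr
          (Nat.coprime_two_left.mpr (Nat.odd_iff.mpr (by omega)))
      have hz2 : 2 ≤ ‖z‖ := by
        simpa using (Padic.norm_le_pow_iff_norm_lt_pow_add_one z 0).not.mp (by simpa using hz)
      refine absurd (by rw [h]; ring) <| Padic.sq_ne_mul_one_add_mul_pow_four (a := 3 * p)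
        (b := 2) (w := w) (z := z) (by rw [norm_mul, h3p, h2, one_mul]; norm_num) ?_
      rw [norm_mul, norm_pow, h2]
      nlinarith [pow_le_pow_left₀ zero_le_two hz2 4]
  · rintro (h | h)
    · obtain ⟨s, hs⟩ := exists_sq_eq_of_eight_dvd_sub_one (c := p) (by omega)
      exact (HasC3pPoint.of_sq_eq (z := 1) (k := 3) (by ring) hs).map Coe.ringHom
    · obtain ⟨s, hs⟩ := exists_sq_eq_of_eight_dvd_sub_one (c := 3 * p) (by omega)
      exact (HasC3pPoint.of_sq_eq (z := 0) (k := 1) (by ring) hs).map Coe.ringHom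

theorem hasC3pPoint_padic_three {p : ℕ} (hp : ¬3 ∣ p) : HasC3pPoint ℚ_[3] p := by
  rcases (by omega : p % 3 = 1 ∨ p % 3 = 2) with h | h
  · obtain ⟨s, hs⟩ := exists_sq_eq_of_dvd_sub_one (q := 3) (by norm_num) (c := p) (by omega)
    exact (HasC3pPoint.of_sq_eq (z := 1) (k := 3) (by ring) hs).map Coe.ringHom
  · obtain ⟨s, hs⟩ :=
      exists_sq_eq_of_dvd_sub_one (q := 3) (by norm_num) (c := 11 * p) (by omega)
    exact (HasC3pPoint.of_sq_eq (z := 2) (k := 3) (by ring) hs).map Coe.ringHom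

theorem exists_one_add_two_mul_pow_four_eq_zero_of_hasC3pPoint {p : ℕ} [Fact p.Prime]
    (hp2 : p ≠ 2) (hp3 : p ≠ 3) (h : HasC3pPoint ℚ_[p] p) :
    ∃ x : ZMod p, 1 + 2 * x ^ 4 = 0 := by
  obtain ⟨z, w, h⟩ := h
  have h' : w ^ 2 = 3 * p * (1 + 2 * z ^ 4) := by rw [h]; ring
  have hcop (r : ℕ) (hr : r.Prime) (hpr : p ≠ r) : ‖(r : ℚ_[p])‖ = 1 :=
    Padic.norm_natCast_eq_one_iff.mpr ((Nat.coprime_primes Fact.out hr).mpr hpr)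
  have h2 : ‖(2 : ℚ_[p])‖ = 1 := by exact_mod_cast hcop 2 Nat.prime_two hp2
  have h3 : ‖(3 : ℚ_[p])‖ = 1 := by exact_mod_cast hcop 3 Nat.prime_three hp3
  have h3p : ‖(3 * p : ℚ_[p])‖ = (p : ℝ)⁻¹ := by rw [norm_mul, Padic.norm_p, h3, one_mul]
  rcases le_or_gt ‖z‖ 1 with hz | hz
  · obtain ⟨z, rfl⟩ : ∃ z' : ℤ_[p], (z' : ℚ_[p]) = z := ⟨⟨z, hz⟩, rfl⟩
    rcases (norm_le_one (1 + 2 * z ^ 4 : ℤ_[p])).lt_or_eq with hlt | hu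
    · refine ⟨toZMod z, ?_⟩
      simpa only [map_add, map_one, map_mul, map_pow, map_ofNat] using
        toZMod_eq_zero_iff_norm_lt_one.mpr hlt
    · refine absurd h' (Padic.sq_ne_of_norm_eq_zpow_of_odd odd_neg_one ?_)
      rw [norm_mul, h3p, show ‖1 + 2 * (z : ℚ_[p]) ^ 4‖ = 1 from hu, mul_one, zpow_neg_one]
  · refine absurd h' <| Padic.sq_ne_mul_one_add_mul_pow_four
      (by rw [norm_mul, h3p, h2, mul_one]) ?_
    rw [norm_mul, h2, one_mul, norm_pow]
    exact one_lt_pow₀ hz (by norm_num)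

theorem hasC3pPoint_padic_of_one_add_two_mul_pow_four_eq_zero {p : ℕ} [Fact p.Prime]
    {x : ZMod p} (hx : 1 + 2 * x ^ 4 = 0) : HasC3pPoint ℚ_[p] p := by
  obtain ⟨m, rfl⟩ := ZMod.intCast_surjective x
  obtain ⟨k, hk⟩ : (p : ℤ) ∣ 1 + 2 * m ^ 4 :=
    (ZMod.intCast_zmod_eq_zero_iff_dvd _ p).mp (by push_cast; exact hx)
  have hcop : IsCoprime (2 * m) p := ⟨-m ^ 3, k, by linear_combination -hk⟩
  obtain ⟨t, ht⟩ := exists_mul_pow_eq_of_norm_lt (q := p) (n := 4) (a := m) (b := 2)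
    (c := 3 * p - 1) <| by
    have hlhs : ‖((1 + 2 * m ^ 4 - 3 * p : ℤ) : ℤ_[p])‖ < 1 :=
      norm_intCast_lt_one_iff.mpr ⟨k - 3, by rw [hk]; ring⟩
    have hrhs : ‖(((2 * m) ^ 3 : ℤ) : ℤ_[p])‖ = 1 :=
      norm_intCast_eq_one_iff.mpr hcop.pow_left
    push_cast at hlhs hrhs
    convert hlhs using 2
    · ring
    · rw [show ((4 : ℕ) : ℤ_[p]) * 2 * (m : ℤ_[p]) ^ (4 - 1) = (2 * m) ^ 3 by
        push_cast; ring, hrhs, one_pow]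
  exact HasC3pPoint.map Coe.ringHom ⟨t, 3 * p, by linear_combination (-3 * p : ℤ_[p]) * ht⟩

theorem hasC3pPoint_padic_iff {p : ℕ} [Fact p.Prime] (hp2 : p ≠ 2) (hp3 : p ≠ 3) :
    HasC3pPoint ℚ_[p] p ↔ ∃ x : ZMod p, 1 + 2 * x ^ 4 = 0 :=
  ⟨exists_one_add_two_mul_pow_four_eq_zero_of_hasC3pPoint hp2 hp3,
    fun ⟨_, hx⟩ => hasC3pPoint_padic_of_one_add_two_mul_pow_four_eq_zero hx⟩

theorem C3p_locally_solvable_iff (p : ℕ) [Fact p.Prime] (hp2 : p ≠ 2) (hp3 : p ≠ 3) :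
    ((∃ z w : ℚ_[2], w ^ 2 = 3 * (p : ℚ_[2]) + 6 * (p : ℚ_[2]) * z ^ 4) ∧
      (∃ z w : ℚ_[3], w ^ 2 = 3 * (p : ℚ_[3]) + 6 * (p : ℚ_[3]) * z ^ 4) ∧
      (∃ z w : ℚ_[p], w ^ 2 = 3 * (p : ℚ_[p]) + 6 * (p : ℚ_[p]) * z ^ 4)) ↔
      ((p % 24 = 11 ∨ p % 24 = 19) ∨
        ((p % 24 = 1 ∨ p % 24 = 17) ∧ ∃ x : ℤ, x ^ 4 ≡ 2 [ZMOD (p : ℤ)])) := by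
  have hp : p.Prime := Fact.out
  have hodd : p % 2 = 1 := Nat.odd_iff.mp (hp.odd_of_ne_two hp2)
  have h3 : ¬3 ∣ p := fun h => hp3 ((Nat.prime_dvd_prime_iff_eq Nat.prime_three hp).mp h).symm
  change HasC3pPoint ℚ_[2] p ∧ HasC3pPoint ℚ_[3] p ∧ HasC3pPoint ℚ_[p] p ↔ _
  rw [hasC3pPoint_padic_two_iff hodd, iff_true_intro (hasC3pPoint_padic_three h3), true_and,
    hasC3pPoint_padic_iff hp2 hp3, Int.exists_pow_modEq_iff, Int.cast_ofNat]
  rcases (by omega : p % 8 = 1 ∨ p % 8 = 3 ∨ p % 8 ≠ 1 ∧ p % 8 ≠ 3) with h8 | h8 | h8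
  · rw [ZMod.exists_one_add_two_mul_pow_four_eq_zero_iff h8]
    have : (p % 24 = 1 ∨ p % 24 = 17) ∧ p % 24 ≠ 11 ∧ p % 24 ≠ 19 := by omega
    tauto
  · exact iff_of_true ⟨Or.inr h8, ZMod.exists_one_add_two_mul_pow_four_eq_zero h8⟩
      (Or.inl (by omega))
  · exact iff_of_false (fun h => by omega) (by rintro (h | ⟨h, -⟩) <;> omega)
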